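/- arXiv:2006.00571 — 2 statements merged into one kernel-verified Lean document; each statement's English description precedes it below -/
import Mathlib

section
/- Fix k ∈ ℕ and a finite vertex set X with s, t ∉ X. Let M be a finite multiset of subsets of 𝔅(X), and suppose C ∈ M is such that for every c ∈ C there are at least |X| + 2 elements D of the multiset M \ {C} (M with one occurrence of C removed, elements counted with multiplicity) with c ∈ D. Then ⊕ of all elements of M \ {C} equals ⊕ of all elements of M. -/
/-! Configurations for the `k`-path dynamic program, following the paper.
Graphs live on an ambient vertex type `α`; a graph "with vertex set `S`" is a
`SimpleGraph α` all of whose edges have both endpoints in `S`. -/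

/-- A linear forest: a simple graph that is acyclic and in which every vertex
has degree at most 2. -/
def IsLinearForest {α : Type*} (H : SimpleGraph α) : Prop :=
  H.IsAcyclic ∧ ∀ v : α, (H.neighborSet v).encard ≤ 2

/-- `(H, i)` is a configuration over `X` (an element of `𝔅(X)`): `H` is a linear
forest with vertex set `X ∪ {s, t}` in which `s` and `t` have degree at most 1,
`i ∈ {0, 1, …, k-1} ∪ {∞}`, and `i = 0` whenever `H` has no edges. -/
def IsConfig {α : Type*} (k : ℕ) (s t : α) (X : Set α) (c : SimpleGraph α × ℕ∞) : Prop :=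
  (∀ a b : α, c.1.Adj a b → a ∈ X ∪ {s, t} ∧ b ∈ X ∪ {s, t}) ∧
  IsLinearForest c.1 ∧
  (c.1.neighborSet s).encard ≤ 1 ∧
  (c.1.neighborSet t).encard ≤ 1 ∧
  (c.2 < (k : ℕ∞) ∨ c.2 = ⊤) ∧
  (c.1.edgeSet = ∅ → c.2 = 0)

/-- The set `𝔅(X)` of all configurations over `X`. -/
def ConfigSet {α : Type*} (k : ℕ) (s t : α) (X : Set α) : Set (SimpleGraph α × ℕ∞) :=
  {c | IsConfig k s t X c}

/-- The configuration `(H, i)` is realized in the boundaried graph `(G, X)`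
(where `G` has vertex set `VG`): there is a family of paths `{P_e : e ∈ E(H)}`
in `G` such that for each edge `e = xy` of `H`, each endpoint of `e` lying in
`X` is the corresponding endpoint of `P_e` (an endpoint in `{s, t}` may
correspond to an arbitrary vertex of `G`) and `V(P_e) ∩ X = {x, y} ∩ X`; two
distinct paths are vertex-disjoint except that they may share an endpoint when
the corresponding edges of `H` share an endpoint; and the total number of edges
of the paths equals `i` if `i < ∞`, and is at least `k` if `i = ∞`. -/
def Realized {α : Type*} (k : ℕ) (s t : α) (VG : Set α) (G : SimpleGraph α) (X : Set α)
    (H : SimpleGraph α) (i : ℕ∞) : Prop :=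
  ∃ (ox oy pe qe : Sym2 α → α) (P : (e : Sym2 α) → G.Walk (pe e) (qe e)),
    (∀ e ∈ H.edgeSet, e = s(ox e, oy e)) ∧
    (∀ e ∈ H.edgeSet, (P e).IsPath) ∧
    (∀ e ∈ H.edgeSet, ∀ v ∈ (P e).support, v ∈ VG) ∧
    (∀ e ∈ H.edgeSet, ox e ∈ X → pe e = ox e) ∧
    (∀ e ∈ H.edgeSet, oy e ∈ X → qe e = oy e) ∧
    (∀ e ∈ H.edgeSet, {v | v ∈ (P e).support} ∩ X = ({ox e, oy e} : Set α) ∩ X) ∧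
    (∀ e ∈ H.edgeSet, ∀ f ∈ H.edgeSet, e ≠ f → ∀ v : α,
      v ∈ (P e).support → v ∈ (P f).support →
      (∃ w, w ∈ e ∧ w ∈ f) ∧ (v = pe e ∨ v = qe e) ∧ (v = pe f ∨ v = qe f)) ∧
    ∃ hE : H.edgeSet.Finite,
      (∀ n : ℕ, i = (n : ℕ∞) → ∑ e ∈ hE.toFinset, (P e).length = n) ∧
      (i = ⊤ → k ≤ ∑ e ∈ hE.toFinset, (P e).length)

/-- `conf(G, X)`: the set of configurations over `X` realized in `(G, X)`. -/
def conf {α : Type*} (k : ℕ) (s t : α) (VG : Set α) (G : SimpleGraph α) (X : Set α) :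
    Set (SimpleGraph α × ℕ∞) :=
  {c | IsConfig k s t X c ∧ Realized k s t VG G X c.1 c.2}

/-- `join(H, x)` for `x` of degree 2 with neighbors `y, z`: delete `x` and add
the edge `yz`. -/
def joinAt {α : Type*} (H : SimpleGraph α) (x y z : α) : SimpleGraph α where
  Adj a b := a ≠ b ∧ ((H.Adj a b ∧ a ≠ x ∧ b ≠ x) ∨ (a = y ∧ b = z) ∨ (a = z ∧ b = y))
  symm := by
    constructor
    intro a b h
    obtain ⟨hab, h⟩ := h
    refine ⟨hab.symm, ?_⟩
    rcases h with ⟨h, hx1, hx2⟩ | ⟨h1, h2⟩ | ⟨h1, h2⟩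
    · exact Or.inl ⟨h.symm, hx2, hx1⟩
    · exact Or.inr (Or.inr ⟨h2, h1⟩)
    · exact Or.inr (Or.inl ⟨h2, h1⟩)
  loopless := by constructor; intro a h; exact h.1 rfl

/-- Configurations `(H1, i1)` and `(H2, i2)` are mergeable: their edge sets are
disjoint and `H1 ⊕ H2` is a linear forest in which `s` and `t` have degree at
most 1. -/
def Mergeable {α : Type*} (s t : α) (H1 H2 : SimpleGraph α) : Prop :=
  Disjoint H1.edgeSet H2.edgeSet ∧ IsLinearForest (H1 ⊔ H2) ∧
    ((H1 ⊔ H2).neighborSet s).encard ≤ 1 ∧ ((H1 ⊔ H2).neighborSet t).encard ≤ 1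

/-- The truncated sum `i ⊞ j`: `i + j` if both are finite and `i + j ≤ k - 1`,
and `∞` otherwise. -/
def truncAdd (k : ℕ) (i j : ℕ∞) : ℕ∞ :=
  if i + j < (k : ℕ∞) then i + j else ⊤

/-- The operator `⊕` on sets of configurations:
`C1 ⊕ C2 = C1 ∪ C2 ∪ {(H1 ⊕ H2, i1 ⊞ i2) : (H1,i1) ∈ C1, (H2,i2) ∈ C2 mergeable}`. -/
def confOplus {α : Type*} (k : ℕ) (s t : α) (C1 C2 : Set (SimpleGraph α × ℕ∞)) :
    Set (SimpleGraph α × ℕ∞) :=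
  C1 ∪ C2 ∪ {c | ∃ H1 i1 H2 i2, (H1, i1) ∈ C1 ∧ (H2, i2) ∈ C2 ∧
    Mergeable s t H1 H2 ∧ c = (H1 ⊔ H2, truncAdd k i1 i2)}

section StmtFiveAux

variable {α : Type*}

private lemma truncAdd_comm' (k : ℕ) (i j : ℕ∞) : truncAdd k i j = truncAdd k j i := by
  simp only [truncAdd, add_comm]

private lemma truncAdd_assoc_form (k : ℕ) (a b c : ℕ∞) :
    truncAdd k a (truncAdd k b c) = if a + b + c < (k : ℕ∞) then a + b + c else ⊤ := by
  by_cases h : b + c < (k : ℕ∞)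
  · simp only [truncAdd, if_pos h, ← add_assoc]
  · have h2 : ¬ a + b + c < (k : ℕ∞) := by
      intro hc
      exact h (lt_of_le_of_lt le_add_self (by rwa [add_assoc] at hc))
    simp only [truncAdd, if_neg h, add_top, if_neg (not_top_lt), if_neg h2]

private lemma truncAdd_left_comm' (k : ℕ) (a b c : ℕ∞) :
    truncAdd k a (truncAdd k b c) = truncAdd k b (truncAdd k a c) := by
  rw [truncAdd_assoc_form, truncAdd_assoc_form]
  rw [show a + b + c = b + a + c by ring]

private lemma truncAdd_self_zero {k : ℕ} {i : ℕ∞} (h : i < (k : ℕ∞) ∨ i = ⊤) :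
    truncAdd k i 0 = i := by
  rcases h with h | rfl
  · simp [truncAdd, h]
  · simp [truncAdd]

private lemma truncAdd_zero_self {k : ℕ} {i : ℕ∞} (h : i < (k : ℕ∞) ∨ i = ⊤) :
    truncAdd k 0 i = i := by
  rw [truncAdd_comm' k 0 i, truncAdd_self_zero h]

private lemma nbr_mono {G H : SimpleGraph α} (h : H ≤ G) (v : α) :
    H.neighborSet v ⊆ G.neighborSet v := fun _ hw => h hw

private lemma IsLinearForest.mono {G H : SimpleGraph α} (hle : H ≤ G)
    (h : IsLinearForest G) : IsLinearForest H :=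
  ⟨fun _ c hc => h.1 (c.mapLe hle) ((SimpleGraph.Walk.mapLe_isCycle hle).mpr hc),
   fun v => le_trans (Set.encard_mono (nbr_mono hle v)) (h.2 v)⟩

private lemma Mergeable.symm' {s t : α} {H1 H2 : SimpleGraph α}
    (h : Mergeable s t H1 H2) : Mergeable s t H2 H1 := by
  obtain ⟨a, b, c, d⟩ := h
  rw [sup_comm] at b c d
  exact ⟨a.symm, b, c, d⟩

private lemma Mergeable.mono_right {s t : α} {A B B' : SimpleGraph α}
    (h : Mergeable s t A B) (hle : B' ≤ B) : Mergeable s t A B' :=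
  ⟨h.1.mono_right (SimpleGraph.edgeSet_mono hle),
   IsLinearForest.mono (sup_le_sup_left hle A) h.2.1,
   le_trans (Set.encard_mono (nbr_mono (sup_le_sup_left hle A) s)) h.2.2.1,
   le_trans (Set.encard_mono (nbr_mono (sup_le_sup_left hle A) t)) h.2.2.2⟩

private lemma isConfig_merge {k : ℕ} {s t : α} {X : Set α} {H1 H2 : SimpleGraph α}
    {i1 i2 : ℕ∞} (h1 : IsConfig k s t X (H1, i1)) (h2 : IsConfig k s t X (H2, i2))
    (hm : Mergeable s t H1 H2) : IsConfig k s t X (H1 ⊔ H2, truncAdd k i1 i2) := by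
  obtain ⟨he1, -, -, -, hv1, hz1⟩ := h1
  obtain ⟨he2, -, -, -, hv2, hz2⟩ := h2
  refine ⟨?_, hm.2.1, hm.2.2.1, hm.2.2.2, ?_, ?_⟩
  · intro a b hab
    rcases hab with hab | hab
    exacts [he1 a b hab, he2 a b hab]
  · unfold truncAdd
    split_ifs with h
    · exact Or.inl h
    · exact Or.inr rfl
  · intro hemp
    rw [SimpleGraph.edgeSet_sup, Set.union_empty_iff] at hemp
    have e1 : i1 = 0 := hz1 hemp.1
    have e2 : i2 = 0 := hz2 hemp.2
    have hk : (0 : ℕ∞) < (k : ℕ∞) := by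
      rcases hv1 with h | h
      · rw [e1] at h; exact h
      · rw [e1] at h; exact absurd h (by simp)
    simp [truncAdd, e1, e2, hk]

private lemma subset_confOplus_left (k : ℕ) (s t : α) (C1 C2 : Set (SimpleGraph α × ℕ∞)) :
    C1 ⊆ confOplus k s t C1 C2 := fun _ hc => Set.mem_union_left _ (Set.mem_union_left _ hc)

private lemma subset_confOplus_right (k : ℕ) (s t : α) (C1 C2 : Set (SimpleGraph α × ℕ∞)) :
    C2 ⊆ confOplus k s t C1 C2 := fun _ hc => Set.mem_union_left _ (Set.mem_union_right _ hc)

private lemma confOplus_mono_right (k : ℕ) (s t : α) (C1 : Set (SimpleGraph α × ℕ∞))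
    {A B : Set (SimpleGraph α × ℕ∞)} (h : A ⊆ B) :
    confOplus k s t C1 A ⊆ confOplus k s t C1 B := by
  intro c hc
  rcases hc with (hc | hc) | hc
  · exact Set.mem_union_left _ (Set.mem_union_left _ hc)
  · exact Set.mem_union_left _ (Set.mem_union_right _ (h hc))
  · obtain ⟨H1, i1, H2, i2, hh1, hh2, hm, rfl⟩ := hc
    exact Set.mem_union_right _ ⟨H1, i1, H2, i2, hh1, h hh2, hm, rfl⟩

private lemma foldr_mono_sublist (k : ℕ) (s t : α)
    {L1 L2 : List (Set (SimpleGraph α × ℕ∞))} (h : L1.Sublist L2) :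
    L1.foldr (confOplus k s t) ∅ ⊆ L2.foldr (confOplus k s t) ∅ := by
  induction h with
  | slnil => exact subset_rfl
  | cons D h ih => exact ih.trans (subset_confOplus_right k s t D _)
  | cons_cons D h ih => exact confOplus_mono_right k s t D ih

private lemma mem_foldr_of_mem {k : ℕ} {s t : α} {L : List (Set (SimpleGraph α × ℕ∞))}
    {D : Set (SimpleGraph α × ℕ∞)} (hD : D ∈ L) {c : SimpleGraph α × ℕ∞} (hc : c ∈ D) :
    c ∈ L.foldr (confOplus k s t) ∅ :=
  foldr_mono_sublist k s t (List.singleton_sublist.mpr hD)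
    (subset_confOplus_left k s t D ∅ hc)

private lemma foldr_subset_config {k : ℕ} {s t : α} {X : Set α} :
    ∀ {L : List (Set (SimpleGraph α × ℕ∞))}, (∀ D ∈ L, D ⊆ ConfigSet k s t X) →
      L.foldr (confOplus k s t) ∅ ⊆ ConfigSet k s t X := by
  intro L
  induction L with
  | nil => intro _; simp
  | cons D L ih =>
    intro h c hc
    rcases hc with (hc | hc) | hc
    · exact h D (List.mem_cons_self) hc
    · exact ih (fun D' hD' => h D' (List.mem_cons_of_mem _ hD')) hc
    · obtain ⟨H1, i1, H2, i2, h1, h2, hm, rfl⟩ := hc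
      exact isConfig_merge (h D (List.mem_cons_self) h1)
        (ih (fun D' hD' => h D' (List.mem_cons_of_mem _ hD')) h2) hm

private lemma isConfig_edge_finite {k : ℕ} {s t : α} {X : Set α} (hX : X.Finite)
    {c : SimpleGraph α × ℕ∞} (hc : IsConfig k s t X c) : c.1.edgeSet.Finite := by
  have hV : (X ∪ {s, t} : Set α).Finite := hX.union ((Set.finite_singleton t).insert s)
  have hsub : c.1.edgeSet ⊆ (fun p : α × α => s(p.1, p.2)) '' ((X ∪ {s, t}) ×ˢ (X ∪ {s, t})) := by
    intro e he
    induction e with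
    | _ a b =>
      rw [SimpleGraph.mem_edgeSet] at he
      obtain ⟨ha, hb⟩ := hc.1 a b he
      exact ⟨(a, b), ⟨ha, hb⟩, rfl⟩
  exact (((hV.prod hV).image _)).subset hsub



open Finset in

private lemma isConfig_edge_card' {α : Type*} {s t : α} (hst : s ≠ t) {X : Finset α}
    (hs : s ∉ X) (ht : t ∉ X) {H : SimpleGraph α}
    (hmem : ∀ a b : α, H.Adj a b → a ∈ (↑X : Set α) ∪ {s, t} ∧ b ∈ (↑X : Set α) ∪ {s, t})
    (hdeg : ∀ v : α, (H.neighborSet v).encard ≤ 2)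
    (hds : (H.neighborSet s).encard ≤ 1) (hdt : (H.neighborSet t).encard ≤ 1) :
    H.edgeSet.ncard ≤ X.card + 1 := by
  classical
  set V' : Finset α := insert s (insert t X) with hV'
  have hsetV : ∀ a : α, a ∈ (↑X : Set α) ∪ {s, t} → a ∈ V' := by
    intro a ha
    simp only [Set.mem_union, Set.mem_insert_iff, Set.mem_singleton_iff, Finset.mem_coe] at ha
    simp only [hV', Finset.mem_insert]
    tauto
  have hmem' : ∀ a b : α, H.Adj a b → a ∈ V' ∧ b ∈ V' := by
    intro a b hab
    obtain ⟨ha, hb⟩ := hmem a b hab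
    exact ⟨hsetV a ha, hsetV b hb⟩
  set G' : SimpleGraph {x // x ∈ V'} := SimpleGraph.comap Subtype.val H with hG'
  haveI : DecidableRel G'.Adj := Classical.decRel _
  -- degree bound
  have hdegle : ∀ (v : {x // x ∈ V'}) (n : ℕ), (H.neighborSet ↑v).encard ≤ n →
      G'.degree v ≤ n := by
    intro v n hn
    have h1 : (G'.neighborSet v).encard ≤ (H.neighborSet ↑v).encard := by
      have hsub : Subtype.val '' G'.neighborSet v ⊆ H.neighborSet ↑v := by
        rintro _ ⟨w, hw, rfl⟩
        exact hw
      calc (G'.neighborSet v).encard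
          = (Subtype.val '' G'.neighborSet v).encard :=
            (Set.InjOn.encard_image (Set.injOn_of_injective Subtype.val_injective)).symm
        _ ≤ _ := Set.encard_mono hsub
    have h2 : (G'.neighborSet v).encard = (G'.degree v : ℕ∞) := by
      rw [SimpleGraph.degree, SimpleGraph.neighborFinset]
      exact Set.encard_eq_coe_toFinset_card _
    rw [h2] at h1
    exact_mod_cast h1.trans hn
  have hbound : ∀ v : {x // x ∈ V'}, G'.degree v ≤ if (v : α) = s ∨ (v : α) = t then 1 else 2 := by
    intro v
    split_ifs with h
    · rcases h with h | h
      · exact hdegle v 1 (by rw [h]; exact_mod_cast hds)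
      · exact hdegle v 1 (by rw [h]; exact_mod_cast hdt)
    · exact hdegle v 2 (by exact_mod_cast hdeg ↑v)
  have hsum : ∑ v : {x // x ∈ V'}, G'.degree v ≤ 2 * X.card + 2 := by
    calc ∑ v : {x // x ∈ V'}, G'.degree v
        ≤ ∑ v : {x // x ∈ V'}, (if (v : α) = s ∨ (v : α) = t then 1 else 2) :=
          Finset.sum_le_sum (fun v _ => hbound v)
      _ = ∑ x ∈ V', (if x = s ∨ x = t then 1 else 2) :=
          Finset.sum_coe_sort V' (fun x => if x = s ∨ x = t then 1 else 2)
      _ = 2 * X.card + 2 := by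
          have hsV : s ∉ insert t X := by simp [hst, hs]
          rw [hV', Finset.sum_insert hsV, Finset.sum_insert ht]
          have : ∀ x ∈ X, (if x = s ∨ x = t then 1 else 2) = 2 := by
            intro x hx
            have hxs : x ≠ s := fun h => hs (h ▸ hx)
            have hxt : x ≠ t := fun h => ht (h ▸ hx)
            simp [hxs, hxt]
          rw [Finset.sum_congr rfl this, Finset.sum_const, smul_eq_mul]
          simp [hst]
          ring
  -- edge transfer
  have himg : H.edgeSet = Sym2.map (Subtype.val) '' G'.edgeSet := by
    ext e
    constructor
    · intro he
      induction e with
      | _ a b =>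
        rw [SimpleGraph.mem_edgeSet] at he
        obtain ⟨ha, hb⟩ := hmem' a b he
        exact ⟨s(⟨a, ha⟩, ⟨b, hb⟩), he, rfl⟩
    · rintro ⟨e', he', rfl⟩
      revert he'
      induction e' with
      | _ u v =>
        intro he'
        exact he'
  have hcard : H.edgeSet.ncard = G'.edgeFinset.card := by
    rw [himg, Set.ncard_image_of_injective _ (Sym2.map.injective Subtype.val_injective),
      SimpleGraph.edgeFinset]
    exact Set.ncard_eq_toFinset_card' _
  have hhs := SimpleGraph.sum_degrees_eq_twice_card_edges G'
  rw [hcard]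
  omega

private lemma lemG {α : Type*} (k : ℕ) (s t : α) (X : Finset α) :
    ∀ (L : List (Set (SimpleGraph α × ℕ∞))), (∀ D ∈ L, D ⊆ ConfigSet k s t ↑X) →
    ∀ c d : SimpleGraph α × ℕ∞, IsConfig k s t ↑X c →
    d ∈ L.foldr (confOplus k s t) ∅ → Mergeable s t c.1 d.1 →
    ∀ L' : List (Set (SimpleGraph α × ℕ∞)), L'.Sublist L → (∀ D ∈ L', c ∈ D) →
    d.1.edgeSet.ncard + 1 ≤ L'.length →
    (c.1 ⊔ d.1, truncAdd k c.2 d.2) ∈ L.foldr (confOplus k s t) ∅ := by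
  intro L
  induction L with
  | nil =>
    intro _ c d _ hd
    simp only [List.foldr_nil] at hd
    exact absurd hd (Set.notMem_empty d)
  | cons D L'' ih =>
    intro hL c d hc hd hm L' hsub hall hlen
    have hL'' : ∀ D' ∈ L'', D' ⊆ ConfigSet k s t ↑X :=
      fun D' hD' => hL D' (List.mem_cons_of_mem _ hD')
    have hDc : D ⊆ ConfigSet k s t ↑X := hL D (List.mem_cons_self)
    have hXfin : (↑X : Set α).Finite := X.finite_toSet
    rcases hd with (hdD | hdF) | hdM
    · -- case 1: d ∈ D
      by_cases hex : ∃ D' ∈ L'', c ∈ D'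
      · obtain ⟨D', hD', hcD'⟩ := hex
        have hcF : c ∈ L''.foldr (confOplus k s t) ∅ := mem_foldr_of_mem hD' hcD'
        refine Set.mem_union_right _ ⟨d.1, d.2, c.1, c.2, hdD, hcF, hm.symm', ?_⟩
        rw [sup_comm, truncAdd_comm']
      · -- no occurrence of c in L''
        cases hsub with
        | cons _ h =>
          cases L' with
          | nil => simp at hlen
          | cons D' r =>
            exact absurd ⟨D', h.subset (List.mem_cons_self),
              hall D' (List.mem_cons_self)⟩ hex
        | cons_cons _ h =>
          rename_i r
          cases r with
          | cons D' r' =>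
            exact absurd ⟨D', h.subset (List.mem_cons_self),
              hall D' (List.mem_cons_of_mem _ (List.mem_cons_self))⟩ hex
          | nil =>
            have hcd : IsConfig k s t ↑X d := hDc hdD
            have hfin : d.1.edgeSet.Finite := isConfig_edge_finite hXfin hcd
            have h0 : d.1.edgeSet.ncard = 0 := by
              simp only [List.length_cons, List.length_nil] at hlen
              omega
            have hemp : d.1.edgeSet = ∅ := by
              rcases Set.eq_empty_or_nonempty d.1.edgeSet with h | h
              · exact h
              · exact absurd h0 (by have := (Set.ncard_pos hfin).mpr h; omega)
            have hbot : d.1 = ⊥ := SimpleGraph.edgeSet_eq_empty.mp hemp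
            have hz : d.2 = 0 := hcd.2.2.2.2.2 hemp
            have : (c.1 ⊔ d.1, truncAdd k c.2 d.2) = c := by
              rw [hbot, hz, sup_bot_eq, truncAdd_self_zero hc.2.2.2.2.1]
            rw [this]
            exact mem_foldr_of_mem (List.mem_cons_self) (hall D (List.mem_cons_self))
    · -- case 2: d ∈ foldr L''
      by_cases hcD : c ∈ D
      · exact Set.mem_union_right _ ⟨c.1, c.2, d.1, d.2, hcD, hdF, hm, rfl⟩
      · cases hsub with
        | cons _ h =>
          exact subset_confOplus_right k s t D _
            (ih hL'' c d hc hdF hm L' h hall hlen)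
        | cons_cons _ h =>
          exact absurd (hall D (List.mem_cons_self)) hcD
    · -- case 3: d is a merge
      obtain ⟨H1, i1, H2, i2, h1D, h2F, hm12, hdeq⟩ := hdM
      have hcfg1 : IsConfig k s t ↑X (H1, i1) := hDc h1D
      have hcfg2 : IsConfig k s t ↑X (H2, i2) := foldr_subset_config hL'' h2F
      have f1 : H1.edgeSet.Finite := isConfig_edge_finite hXfin hcfg1
      have f2 : H2.edgeSet.Finite := isConfig_edge_finite hXfin hcfg2
      have hm' : Mergeable s t c.1 (H1 ⊔ H2) := by rw [hdeq] at hm; exact hm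
      have hmc2 : Mergeable s t c.1 H2 := hm'.mono_right le_sup_right
      have hnc : d.1.edgeSet.ncard = H1.edgeSet.ncard + H2.edgeSet.ncard := by
        rw [hdeq]
        show (H1 ⊔ H2).edgeSet.ncard = _
        rw [SimpleGraph.edgeSet_sup, Set.ncard_union_eq hm12.1 f1 f2]
      by_cases he1 : H1.edgeSet = ∅
      · -- H1 is trivial
        have hbot : H1 = ⊥ := SimpleGraph.edgeSet_eq_empty.mp he1
        have hi1 : i1 = 0 := hcfg1.2.2.2.2.2 he1
        have hd2 : d = (H2, i2) := by
          rw [hdeq, hbot, hi1, bot_sup_eq, truncAdd_zero_self hcfg2.2.2.2.2.1]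
        by_cases hcD : c ∈ D
        · refine Set.mem_union_right _ ⟨c.1, c.2, H2, i2, hcD, h2F, hmc2, ?_⟩
          rw [hd2]
        · cases hsub with
          | cons _ h =>
            have hlen2 : (H2, i2).1.edgeSet.ncard + 1 ≤ L'.length := by
              rw [hd2] at hlen; exact hlen
            have := ih hL'' c (H2, i2) hc h2F hmc2 L' h hall hlen2
            rw [hd2]
            exact subset_confOplus_right k s t D _ this
          | cons_cons _ h =>
            exact absurd (hall D (List.mem_cons_self)) hcD
      · -- H1 has an edge
        have hpos : 1 ≤ H1.edgeSet.ncard :=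
          (Set.ncard_pos f1).mpr (Set.nonempty_iff_ne_empty.mpr he1)
        have key : ∃ L₂ : List (Set (SimpleGraph α × ℕ∞)), L₂.Sublist L'' ∧
            (∀ D' ∈ L₂, c ∈ D') ∧ H2.edgeSet.ncard + 1 ≤ L₂.length := by
          cases hsub with
          | cons _ h =>
            exact ⟨L', h, hall, by omega⟩
          | cons_cons _ h =>
            rename_i r
            refine ⟨r, h, fun D' hD' => hall D' (List.mem_cons_of_mem _ hD'), ?_⟩
            simp only [List.length_cons] at hlen
            omega
        obtain ⟨L₂, hsub2, hall2, hlen2⟩ := key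
        have m := ih hL'' c (H2, i2) hc h2F hmc2 L₂ hsub2 hall2 hlen2
        have hg : H1 ⊔ (c.1 ⊔ H2) = c.1 ⊔ (H1 ⊔ H2) := sup_left_comm H1 c.1 H2
        refine Set.mem_union_right _ ⟨H1, i1, c.1 ⊔ H2, truncAdd k c.2 i2, h1D, m, ?_, ?_⟩
        · refine ⟨?_, ?_, ?_, ?_⟩
          · rw [SimpleGraph.edgeSet_sup]
            refine Set.disjoint_union_right.mpr ⟨?_, hm12.1⟩
            exact (hm'.1.mono_right (SimpleGraph.edgeSet_mono le_sup_left)).symm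
          · rw [hg]; exact hm'.2.1
          · rw [hg]; exact hm'.2.2.1
          · rw [hg]; exact hm'.2.2.2
        · rw [hdeq, hg]
          show (c.1 ⊔ (H1 ⊔ H2), truncAdd k c.2 (truncAdd k i1 i2)) = _
          rw [truncAdd_left_comm']

end StmtFiveAux

/-- let a finite multiset `M` of subsets of `𝔅(X)` be presented as
`C :: L`, where `L` lists the elements of `M \ {C}` (with multiplicity).
Suppose that for every `c ∈ C` there are at least `|X| + 2` elements `D` of `L`
(counted with multiplicity) with `c ∈ D`. Then the `⊕` of all elements of
`M \ {C}` equals the `⊕` of all elements of `M` (the `⊕` over a list is its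
fold by the commutative and associative operator `⊕`, whose identity is `∅`). -/
theorem stmt5 {α : Type*} (k : ℕ) (s t : α) (hst : s ≠ t)
    (X : Finset α) (hs : s ∉ X) (ht : t ∉ X)
    (C : Set (SimpleGraph α × ℕ∞)) (L : List (Set (SimpleGraph α × ℕ∞)))
    (hC : C ⊆ ConfigSet k s t ↑X) (hL : ∀ D ∈ L, D ⊆ ConfigSet k s t ↑X)
    (hcount : ∀ c ∈ C, ∃ L' : List (Set (SimpleGraph α × ℕ∞)),
      L'.Sublist L ∧ L'.length = X.card + 2 ∧ ∀ D ∈ L', c ∈ D) :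
    L.foldr (confOplus k s t) ∅ = (C :: L).foldr (confOplus k s t) ∅ := by
  have hXfin : (↑X : Set α).Finite := X.finite_toSet
  apply Set.Subset.antisymm
  · exact subset_confOplus_right k s t C _
  · intro d hd
    rcases hd with (hdC | hdF) | hdM
    · obtain ⟨L', hsub, hlen, hall⟩ := hcount d hdC
      cases L' with
      | nil => simp at hlen
      | cons D r =>
        exact mem_foldr_of_mem (hsub.subset (List.mem_cons_self))
          (hall D (List.mem_cons_self))
    · exact hdF
    · obtain ⟨H1, i1, H2, i2, h1C, h2F, hm, rfl⟩ := hdM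
      obtain ⟨L', hsub, hlen, hall⟩ := hcount (H1, i1) h1C
      have hc1 : IsConfig k s t ↑X (H1, i1) := hC h1C
      have hc2 : IsConfig k s t ↑X (H2, i2) := foldr_subset_config hL h2F
      have hbound : (H2, i2).1.edgeSet.ncard + 1 ≤ L'.length := by
        rw [hlen]
        have h2b : H2.edgeSet.ncard ≤ X.card + 1 :=
          isConfig_edge_card' hst hs ht hc2.1 hc2.2.1.2 hc2.2.2.1 hc2.2.2.2.1
        simpa using Nat.add_le_add_right h2b 1
      exact lemG k s t X L hL (H1, i1) (H2, i2) hc1 h2F hm L' hsub hall hbound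
end

section
/- Let G be a finite simple graph and F an elimination forest of G. Then for every vertex u: (1) SReach(u) = (NeiUp(u) ∪ ⋃_{v ∈ children(u)} SReach(v)) \ {u}; and (2) the set of edges of G incident to at least one vertex of desc(u) equals {uu' : u' ∈ NeiUp(u)} ∪ ⋃_{v ∈ children(u)} {edges of G incident to at least one vertex of desc(v)}. -/
/-- `b` is the parent of `a` in the rooted forest given by `parent`. -/
def StepRel {V : Type*} (parent : V → Option V) (a b : V) : Prop := parent a = some b

/-- `u` is an ancestor of `v` (including `u = v`). -/
def IsAncestorOf {V : Type*} (parent : V → Option V) (u v : V) : Prop :=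
  Relation.ReflTransGen (StepRel parent) v u

/-- `u` is a strict ancestor of `v`. -/
def IsStrictAncestorOf {V : Type*} (parent : V → Option V) (u v : V) : Prop :=
  Relation.TransGen (StepRel parent) v u

/-- `desc(u)`: the descendants of `u`, including `u` itself. -/
def descSet {V : Type*} (parent : V → Option V) (u : V) : Set V :=
  {v | IsAncestorOf parent u v}

/-- `children(u)`: the children of `u`. -/
def childrenSet {V : Type*} (parent : V → Option V) (u : V) : Set V :=
  {v | parent v = some u}

/-- `NeiUp(u)`: strict ancestors of `u` adjacent to `u` in `G`. -/
def NeiUp {V : Type*} (G : SimpleGraph V) (parent : V → Option V) (u : V) : Set V :=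
  {w | IsStrictAncestorOf parent w u ∧ G.Adj u w}

/-- `SReach(u)`: strict ancestors of `u` adjacent in `G` to some descendant of `u`. -/
def SReach {V : Type*} (G : SimpleGraph V) (parent : V → Option V) (u : V) : Set V :=
  {w | IsStrictAncestorOf parent w u ∧ ∃ v ∈ descSet parent u, G.Adj v w}

/-- for a finite simple graph `G` with an elimination forest given
by `parent` (the parent links are acyclic, and every edge of `G` joins a vertex
with one of its ancestors), for every vertex `u`:
(1) `SReach(u) = (NeiUp(u) ∪ ⋃_{v ∈ children(u)} SReach(v)) \ {u}`; and
(2) the edges of `G` incident to at least one vertex of `desc(u)` are exactly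
`{uu' : u' ∈ NeiUp(u)}` together with, for each child `v` of `u`, the edges of
`G` incident to at least one vertex of `desc(v)`. -/
theorem stmt9 {V : Type*} [Fintype V] (G : SimpleGraph V) (parent : V → Option V)
    (hacyc : ∀ v : V, ¬ IsStrictAncestorOf parent v v)
    (helim : ∀ a b : V, G.Adj a b →
      IsAncestorOf parent a b ∨ IsAncestorOf parent b a)
    (u : V) :
    SReach G parent u =
      (NeiUp G parent u ∪ ⋃ v ∈ childrenSet parent u, SReach G parent v) \ {u} ∧
    {e ∈ G.edgeSet | ∃ w ∈ e, w ∈ descSet parent u} =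
      {e | ∃ u' ∈ NeiUp G parent u, e = s(u, u')} ∪
        ⋃ v ∈ childrenSet parent u,
          {e ∈ G.edgeSet | ∃ w ∈ e, w ∈ descSet parent v} := by
  have aux : ∀ a b : V, G.Adj a b → a ∈ descSet parent u →
      (∃ u' ∈ NeiUp G parent u, s(a, b) = s(u, u')) ∨
        ∃ v, parent v = some u ∧
          (s(a, b) ∈ G.edgeSet ∧ ∃ w ∈ s(a, b), w ∈ descSet parent v) := by
    intro a b hab ha
    rcases (ha : Relation.ReflTransGen (StepRel parent) a u).cases_tail with h | ⟨c, hac, hcu⟩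
    · subst h
      rcases helim u b hab with h | h
      · rcases (Relation.reflTransGen_iff_eq_or_transGen.mp h) with rfl | h
        · exact absurd rfl hab.ne
        · rcases (Relation.TransGen.tail'_iff.mp h) with ⟨c, hbc, hca⟩
          exact Or.inr ⟨c, hca, G.mem_edgeSet.mpr hab, b, Sym2.mem_mk_right u b, hbc⟩
      · rcases (Relation.reflTransGen_iff_eq_or_transGen.mp h) with h' | h
        · exact absurd h'.symm hab.ne
        · exact Or.inl ⟨b, ⟨h, hab⟩, rfl⟩
    · exact Or.inr ⟨c, hcu, G.mem_edgeSet.mpr hab, a, Sym2.mem_mk_left a b, hac⟩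
  constructor
  · ext w
    simp only [Set.mem_diff, Set.mem_union, Set.mem_iUnion, Set.mem_singleton_iff,
      SReach, NeiUp, Set.mem_setOf_eq, childrenSet, descSet]
    constructor
    · rintro ⟨hanc, d, hd, hadj⟩
      have hwu : w ≠ u := by rintro rfl; exact hacyc w hanc
      refine ⟨?_, hwu⟩
      rcases (hd : Relation.ReflTransGen (StepRel parent) d u).cases_tail with h | ⟨c, hdc, hcu⟩
      · subst h; exact Or.inl ⟨hanc, hadj⟩
      · exact Or.inr ⟨c, hcu, Relation.TransGen.head hcu hanc, d, hdc, hadj⟩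
    · rintro ⟨h | h, hne⟩
      · exact ⟨h.1, u, Relation.ReflTransGen.refl, h.2⟩
      · obtain ⟨v, hv, hstv, d, hd, hadj⟩ := h
        obtain ⟨x, hvx, hxw⟩ := Relation.TransGen.head'_iff.mp hstv
        have hx : x = u := Option.some.inj (hvx.symm.trans hv)
        subst hx
        rcases Relation.reflTransGen_iff_eq_or_transGen.mp hxw with h' | h'
        · exact absurd h' hne
        · exact ⟨h', d, Relation.ReflTransGen.tail hd hv, hadj⟩
  · ext e
    simp only [Set.mem_union, Set.mem_iUnion, Set.mem_setOf_eq, Set.mem_sep_iff,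
      childrenSet, exists_prop]
    constructor
    · intro ⟨he, w, hwe, hwd⟩
      induction e using Sym2.ind with
      | _ a b =>
        have hab : G.Adj a b := G.mem_edgeSet.mp he
        rcases Sym2.mem_iff.mp hwe with rfl | rfl
        · exact aux w b hab hwd
        · have := aux w a hab.symm hwd
          rwa [Sym2.eq_swap] at this
    · rintro (⟨u', ⟨hst, hadj⟩, rfl⟩ | ⟨v, hv, he, w, hwe, hwd⟩)
      · exact ⟨G.mem_edgeSet.mpr hadj, u, Sym2.mem_mk_left u u', Relation.ReflTransGen.refl⟩
      · exact ⟨he, w, hwe, Relation.ReflTransGen.tail hwd hv⟩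
end
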